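/- Let D and H be independent nonnegative real random variables where D has probability density function r ↦ 2πλ r exp(−πλ r²) on (0, ∞) (with λ > 0) and H is exponentially distributed with mean Ω > 0 (density h ↦ Ω⁻¹ exp(−h/Ω) on (0, ∞)). Fix p₀ > 0, ψ > 0, β > 0, I_SI > 0, P_max > 0, and define the transmit power p* = min(p₀·D^{ψβ}, I_SI/H, P_max). Then for every p with 0 < p < P_max, the cumulative distribution function satisfies ℙ(p* ≤ p) = 1 − exp(−πλ (p/p₀)^{2/(ψβ)})·(1 − exp(−I_SI/(p Ω))). -/

import Mathlib

/-!
Since `p < P_max`, the event `p* ≤ p` is the complement of `{p < p₀ D^{ψβ}} ∩ {p < I_SI / H}`.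
The densities vanish off `(0, ∞)`, where these events read `D > (p/p₀)^{1/(ψβ)}` and
`H < I_SI / p`. By independence the probability of the intersection is the product of the
Rayleigh tail `exp(-πλ (p/p₀)^{2/(ψβ)})` and the exponential c.d.f. `1 - exp(-I_SI/(pΩ))`, each
obtained by the fundamental theorem of calculus.
-/

open MeasureTheory Real Set Filter Topology

theorem setLIntegral_Ioi_ofReal_deriv_eq_sub {g g' : ℝ → ℝ} {a l : ℝ}
    (hderiv : ∀ x ∈ Ici a, HasDerivAt g (g' x) x) (hpos : ∀ x ∈ Ioi a, 0 ≤ g' x)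
    (hg : Tendsto g atTop (𝓝 l)) :
    ∫⁻ x in Ioi a, ENNReal.ofReal (g' x) = ENNReal.ofReal (l - g a) := by
  rw [← integral_Ioi_of_hasDerivAt_of_nonneg' hderiv hpos hg,
    ofReal_integral_eq_lintegral_ofReal (integrableOn_Ioi_deriv_of_nonneg' hderiv hpos hg)
      (ae_restrict_of_forall_mem measurableSet_Ioi hpos)]

theorem setLIntegral_Ioo_ofReal_deriv_eq_sub {g g' : ℝ → ℝ} {a b : ℝ} (hab : a ≤ b)
    (hcont : ContinuousOn g (Icc a b)) (hderiv : ∀ x ∈ Ioo a b, HasDerivAt g (g' x) x)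
    (hpos : ∀ x ∈ Ioo a b, 0 ≤ g' x) :
    ∫⁻ x in Ioo a b, ENNReal.ofReal (g' x) = ENNReal.ofReal (g b - g a) := by
  have hint : IntegrableOn g' (Ioc a b) :=
    intervalIntegral.integrableOn_deriv_of_nonneg hcont hderiv hpos
  rw [← intervalIntegral.integral_eq_sub_of_hasDerivAt_of_le hab hcont hderiv
      ((intervalIntegrable_iff_integrableOn_Ioc_of_le hab).2 hint),
    intervalIntegral.integral_of_le hab, integral_Ioc_eq_integral_Ioo,
    ofReal_integral_eq_lintegral_ofReal (hint.mono_set Ioo_subset_Ioc_self)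
      (ae_restrict_of_forall_mem measurableSet_Ioo hpos)]

theorem setLIntegral_Ioi_rayleigh_density {lam a : ℝ} (hlam : 0 < lam) (ha : 0 ≤ a) :
    ∫⁻ r in Ioi a, ENNReal.ofReal (2 * π * lam * r * exp (-(π * lam * r ^ 2))) =
      ENNReal.ofReal (exp (-(π * lam * a ^ 2))) := by
  have hderiv (x : ℝ) : HasDerivAt (fun r => -exp (-(π * lam * r ^ 2)))
      (2 * π * lam * x * exp (-(π * lam * x ^ 2))) x := by
    refine (((hasDerivAt_pow 2 x).const_mul (π * lam)).fun_neg.exp).fun_neg.congr_deriv ?_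
    norm_num
    ring
  have hlim : Tendsto (fun r => -exp (-(π * lam * r ^ 2))) atTop (𝓝 (-0)) :=
    (tendsto_exp_atBot.comp <| tendsto_neg_atTop_atBot.comp <|
      (tendsto_pow_atTop two_ne_zero).const_mul_atTop (by positivity)).neg
  rw [setLIntegral_Ioi_ofReal_deriv_eq_sub (fun x _ => hderiv x)
    (fun x hx => by have : 0 ≤ x := ha.trans hx.le; positivity) hlim]
  simp

theorem setLIntegral_Ioo_exponential_density {Om c : ℝ} (hOm : 0 < Om) (hc : 0 ≤ c) :
    ∫⁻ h in Ioo 0 c, ENNReal.ofReal (Om⁻¹ * exp (-(h / Om))) =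
      ENNReal.ofReal (1 - exp (-(c / Om))) := by
  have hderiv (x : ℝ) : HasDerivAt (fun h => -exp (-(h / Om))) (Om⁻¹ * exp (-(x / Om))) x := by
    refine (((hasDerivAt_id x).div_const Om).fun_neg.exp).fun_neg.congr_deriv ?_
    simp only [id]
    ring
  rw [setLIntegral_Ioo_ofReal_deriv_eq_sub hc
    (fun x _ => (hderiv x).continuousAt.continuousWithinAt) (fun x _ => hderiv x)
    (fun x _ => by positivity)]
  congr 1
  rw [zero_div, neg_zero, exp_zero]
  ring

theorem withDensity_ofReal_ite_pos_apply (g : ℝ → ℝ) (s : Set ℝ) :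
    volume.withDensity (fun x => ENNReal.ofReal (if 0 < x then g x else 0)) s =
      ∫⁻ x in s ∩ Ioi 0, ENNReal.ofReal (g x) := by
  have hind : (fun x => ENNReal.ofReal (if 0 < x then g x else 0)) =
      (Ioi 0).indicator fun x => ENNReal.ofReal (g x) := by
    ext x
    by_cases hx : 0 < x <;> simp [hx]
  rw [withDensity_apply' _ s, hind, lintegral_indicator measurableSet_Ioi,
    Measure.restrict_restrict measurableSet_Ioi, inter_comm]

-- `r ^ κ` is a junk value for `r < 0`, so only the positive half-line is identified.
theorem setOf_lt_mul_rpow_inter_Ioi {p p₀ κ : ℝ} (hp : 0 < p) (hp₀ : 0 < p₀) (hκ : 0 < κ) :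
    {r : ℝ | p < p₀ * r ^ κ} ∩ Ioi 0 = Ioi ((p / p₀) ^ κ⁻¹) := by
  have hq : 0 < p / p₀ := div_pos hp hp₀
  ext r
  simp only [mem_inter_iff, mem_ofPred_eq, mem_Ioi]
  constructor
  · rintro ⟨hpr, hr⟩
    exact (rpow_inv_lt_iff_of_pos hq.le hr.le hκ).2 ((div_lt_iff₀' hp₀).2 hpr)
  · intro hr
    have hr₀ : 0 < r := (rpow_pos_of_pos hq _).trans hr
    exact ⟨(div_lt_iff₀' hp₀).1 ((rpow_inv_lt_iff_of_pos hq.le hr₀.le hκ).1 hr), hr₀⟩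

theorem setOf_lt_div_inter_Ioi {p I : ℝ} (hp : 0 < p) :
    {h : ℝ | p < I / h} ∩ Ioi 0 = Ioo 0 (I / p) := by
  ext h
  simp only [mem_inter_iff, mem_ofPred_eq, mem_Ioi, mem_Ioo]
  constructor
  · rintro ⟨hph, hh⟩
    exact ⟨hh, (lt_div_iff₀ hp).2 (by linarith [(lt_div_iff₀ hh).1 hph])⟩
  · rintro ⟨hh, hhI⟩
    exact ⟨(lt_div_iff₀ hh).2 (by linarith [(lt_div_iff₀ hp).1 hhI]), hh⟩

theorem min_min_le_iff_of_lt {α : Type*} [LinearOrder α] {x y M p : α} (h : p < M) :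
    min (min x y) M ≤ p ↔ ¬(p < x ∧ p < y) := by
  simp only [min_le_iff, not_and_or, not_lt, or_iff_left_iff_imp]
  exact fun hM => absurd hM h.not_ge

theorem sia_power_control_cdf
    {Ω : Type*} [MeasurableSpace Ω] (P : Measure Ω) [IsProbabilityMeasure P]
    (D H : Ω → ℝ) (hDm : Measurable D) (hHm : Measurable H)
    (lam Om p₀ ψ β ISI Pmax : ℝ)
    (hlam : 0 < lam) (hOm : 0 < Om) (hp₀ : 0 < p₀) (hψ : 0 < ψ) (hβ : 0 < β)
    (hISI : 0 < ISI)
    (hindep : ProbabilityTheory.IndepFun D H P)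
    (hD : Measure.map D P =
      (volume : Measure ℝ).withDensity
        (fun r => ENNReal.ofReal
          (if 0 < r then 2 * π * lam * r * Real.exp (-(π * lam * r ^ 2)) else 0)))
    (hH : Measure.map H P =
      (volume : Measure ℝ).withDensity
        (fun h => ENNReal.ofReal
          (if 0 < h then Om⁻¹ * Real.exp (-(h / Om)) else 0))) :
    ∀ p : ℝ, 0 < p → p < Pmax →
      P {ω | min (min (p₀ * D ω ^ (ψ * β)) (ISI / H ω)) Pmax ≤ p} =
        ENNReal.ofReal
          (1 - Real.exp (-(π * lam * (p / p₀) ^ (2 / (ψ * β)))) *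
            (1 - Real.exp (-(ISI / (p * Om))))) := by
  intro p hp hpP
  have hκ : 0 < ψ * β := mul_pos hψ hβ
  set s : Set ℝ := {r | p < p₀ * r ^ (ψ * β)}
  set t : Set ℝ := {h | p < ISI / h}
  have hs : MeasurableSet s :=
    measurableSet_lt measurable_const ((continuous_rpow_const hκ.le).measurable.const_mul p₀)
  have ht : MeasurableSet t := measurableSet_lt measurable_const (measurable_const.div measurable_id)
  have hevent : {ω | min (min (p₀ * D ω ^ (ψ * β)) (ISI / H ω)) Pmax ≤ p} =
      (D ⁻¹' s ∩ H ⁻¹' t)ᶜ := by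
    ext ω
    exact min_min_le_iff_of_lt hpP
  have hDs : P (D ⁻¹' s) = ENNReal.ofReal (exp (-(π * lam * (p / p₀) ^ (2 / (ψ * β))))) := by
    rw [← Measure.map_apply hDm hs, hD, withDensity_ofReal_ite_pos_apply,
      setOf_lt_mul_rpow_inter_Ioi hp hp₀ hκ,
      setLIntegral_Ioi_rayleigh_density hlam (rpow_nonneg (div_pos hp hp₀).le _),
      ← rpow_natCast, ← rpow_mul (div_pos hp hp₀).le]
    congr 5
    push_cast
    ring
  have hHt : P (H ⁻¹' t) = ENNReal.ofReal (1 - exp (-(ISI / (p * Om)))) := by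
    rw [← Measure.map_apply hHm ht, hH, withDensity_ofReal_ite_pos_apply,
      setOf_lt_div_inter_Ioi hp, setLIntegral_Ioo_exponential_density hOm (div_pos hISI hp).le,
      div_div]
  have hprod_nonneg : 0 ≤ exp (-(π * lam * (p / p₀) ^ (2 / (ψ * β)))) *
      (1 - exp (-(ISI / (p * Om)))) :=
    mul_nonneg (exp_nonneg _) (sub_nonneg.2 (exp_le_one_iff.2 (neg_nonpos.2 (by positivity))))
  rw [hevent, measure_compl ((hDm hs).inter (hHm ht)) (measure_ne_top P _), measure_univ,
    hindep.measure_inter_preimage_eq_mul s t hs ht, hDs, hHt, ← ENNReal.ofReal_mul (exp_nonneg _),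
    ENNReal.ofReal_sub _ hprod_nonneg, ENNReal.ofReal_one]
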